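/- Let T be a bounded injective linear operator with dense range on an infinite-dimensional complex Hilbert space H, and suppose T is not surjective. Then there exists an orthonormal sequence (g_n) in H such that ‖T g_n‖ → 0 as n → ∞ and span{g_j, T g_j} is orthogonal to span{g_k, T g_k} for all j ≠ k. -/

import Mathlib

open Filter Topology

section Key

variable {H : Type*} [NormedAddCommGroup H] [InnerProductSpace ℂ H] [CompleteSpace H]

/-- Key step: given a finite-dimensional subspace `V` and `ε > 0`, there is a unit vector `g`
with `g ⊥ V`, `T g ⊥ V` and `‖T g‖ < ε`. -/
theorem key_lemma (T : H →L[ℂ] H) (hdr : DenseRange (T : H → H))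
    (hns : ¬ Function.Surjective (T : H → H))
    (V : Submodule ℂ H) (hV : FiniteDimensional ℂ V) (ε : ℝ) (hε : 0 < ε) :
    ∃ g : H, ‖g‖ = 1 ∧ ‖T g‖ < ε ∧ g ∈ Vᗮ ∧ T g ∈ Vᗮ := by
  classical
  haveI := hV
  set U : Submodule ℂ H :=
    V ⊔ V.map ((ContinuousLinearMap.adjoint T) : H →ₗ[ℂ] H) with hUdef
  haveI : FiniteDimensional ℂ U := by
    infer_instance
  have main : ∃ g : H, g ∈ Uᗮ ∧ ‖g‖ = 1 ∧ ‖T g‖ < ε := by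
    by_contra hcon
    push_neg at hcon
    -- `T` is bounded below on `Uᗮ`
    have hbd : ∀ x : Uᗮ, ‖(x : H)‖ ≤ (ε⁻¹ : ℝ) * ‖T (x : H)‖ := by
      intro x
      rcases eq_or_ne (x : H) 0 with h | h
      · simp [h]
      · have hx : (0 : ℝ) < ‖(x : H)‖ := norm_pos_iff.2 h
        set u : H := (‖(x : H)‖⁻¹ : ℂ) • (x : H) with hu
        have hu1 : ‖u‖ = 1 := by
          rw [hu, norm_smul]
          simp [norm_inv, hx.ne']
        have huU : u ∈ Uᗮ := Submodule.smul_mem _ _ x.2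
        have h1 : ε ≤ ‖T u‖ := hcon u huU hu1
        have h2 : ‖T u‖ = ‖(x : H)‖⁻¹ * ‖T (x : H)‖ := by
          rw [hu, map_smul, norm_smul]
          simp [norm_inv]
        rw [h2] at h1
        have h3 : ε * ‖(x : H)‖ ≤ ‖T (x : H)‖ := by
          rw [← le_div_iff₀ hx]
          rwa [inv_mul_eq_div] at h1
        calc ‖(x : H)‖ = ε⁻¹ * (ε * ‖(x : H)‖) := by field_simp
          _ ≤ ε⁻¹ * ‖T (x : H)‖ := by
              exact mul_le_mul_of_nonneg_left h3 (inv_pos.2 hε).le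
    set f : Uᗮ →L[ℂ] H := T.comp (Submodule.subtypeL Uᗮ) with hf
    have hfb : ∀ x : Uᗮ, ‖x‖ ≤ (ε⁻¹.toNNReal : ℝ) * ‖f x‖ := by
      intro x
      have : (ε⁻¹.toNNReal : ℝ) = ε⁻¹ := Real.coe_toNNReal _ (inv_nonneg.2 hε.le)
      rw [this]
      simpa [hf] using hbd x
    have hanti : AntilipschitzWith ε⁻¹.toNNReal f := f.antilipschitz_of_bound hfb
    have hclosed : IsClosed (Set.range f) := hanti.isClosed_range f.uniformContinuous
    set W : Submodule ℂ H := Uᗮ.map (T : H →ₗ[ℂ] H) with hW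
    have hrange : Set.range f = (W : Set H) := by
      ext y
      constructor
      · rintro ⟨x, rfl⟩
        exact ⟨x, x.2, rfl⟩
      · rintro ⟨x, hx, rfl⟩
        exact ⟨⟨x, hx⟩, rfl⟩
    have hWclosed : IsClosed (W : Set H) := hrange ▸ hclosed
    set F : Submodule ℂ H := U.map (T : H →ₗ[ℂ] H) with hF
    haveI : FiniteDimensional ℂ F := inferInstance
    -- `W ⊔ F` is closed: pass to the quotient by `W`
    haveI : IsClosed (W : Set H) := hWclosed
    have hq : IsClosed ((W ⊔ F : Submodule ℂ H) : Set H) := by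
      have h1 : IsClosed ((F.map W.mkQ : Submodule ℂ (H ⧸ W)) : Set (H ⧸ W)) :=
        Submodule.closed_of_finiteDimensional _
      have h2 : Continuous W.mkQ := continuous_quot_mk
      have h3 : ((W ⊔ F : Submodule ℂ H) : Set H) = W.mkQ ⁻¹' (F.map W.mkQ : Set (H ⧸ W)) := by
        rw [← Submodule.comap_map_mkQ W F]
        rfl
      rw [h3]
      exact h1.preimage h2
    -- the range of `T` is `W ⊔ F`
    have htop : U ⊔ Uᗮ = ⊤ := Submodule.sup_orthogonal_of_hasOrthogonalProjection
    have hrangeT : LinearMap.range (T : H →ₗ[ℂ] H) = W ⊔ F := by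
      rw [← Submodule.map_top, ← htop, Submodule.map_sup, sup_comm]
    have hdense : Dense ((W ⊔ F : Submodule ℂ H) : Set H) := by
      have : Set.range (T : H → H) = ((W ⊔ F : Submodule ℂ H) : Set H) := by
        rw [← hrangeT]; exact (LinearMap.coe_range _).symm
      rw [← this]; exact hdr
    have huniv : ((W ⊔ F : Submodule ℂ H) : Set H) = Set.univ := by
      rw [← hq.closure_eq]
      exact hdense.closure_eq
    apply hns
    intro y
    have : y ∈ LinearMap.range (T : H →ₗ[ℂ] H) := by
      rw [hrangeT]
      have : y ∈ ((W ⊔ F : Submodule ℂ H) : Set H) := by rw [huniv]; trivial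
      exact this
    obtain ⟨x, hx⟩ := this
    exact ⟨x, hx⟩
  obtain ⟨g, hgU, hg1, hgε⟩ := main
  refine ⟨g, hg1, hgε, ?_, ?_⟩
  · exact Submodule.orthogonal_le le_sup_left hgU
  · rw [Submodule.mem_orthogonal]
    intro v hv
    have h1 : ((ContinuousLinearMap.adjoint T) v) ∈ U :=
      le_sup_right (α := Submodule ℂ H) (Submodule.mem_map_of_mem hv)
    rw [← ContinuousLinearMap.adjoint_inner_left T g v]
    exact hgU _ h1

end Key

section Rec

variable {H : Type*} [NormedAddCommGroup H] [InnerProductSpace ℂ H] [CompleteSpace H]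

/-- The span of a finite list of vectors together with their images under `T`. -/
noncomputable def spanOf (T : H →L[ℂ] H) (l : List H) : Submodule ℂ H :=
  Submodule.span ℂ ({x | x ∈ l} ∪ (T '' {x | x ∈ l}))

lemma spanOf_fd (T : H →L[ℂ] H) (l : List H) : FiniteDimensional ℂ (spanOf T l) :=
  FiniteDimensional.span_of_finite ℂ (l.finite_toSet.union (l.finite_toSet.image T))

/-- The next vector in the construction, given the list of previously chosen vectors. -/
noncomputable def nextVec (T : H →L[ℂ] H) (hdr : DenseRange (T : H → H))
    (hns : ¬ Function.Surjective (T : H → H)) (l : List H) : H :=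
  Classical.choose (key_lemma T hdr hns (spanOf T l) (spanOf_fd T l)
    (1 / (l.length + 1)) (by positivity))

lemma nextVec_spec (T : H →L[ℂ] H) (hdr : DenseRange (T : H → H))
    (hns : ¬ Function.Surjective (T : H → H)) (l : List H) :
    ‖nextVec T hdr hns l‖ = 1 ∧ ‖T (nextVec T hdr hns l)‖ < 1 / (l.length + 1) ∧
      nextVec T hdr hns l ∈ (spanOf T l)ᗮ ∧ T (nextVec T hdr hns l) ∈ (spanOf T l)ᗮ :=
  Classical.choose_spec (key_lemma T hdr hns (spanOf T l) (spanOf_fd T l)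
    (1 / (l.length + 1)) (by positivity))

/-- The list of the first `n` chosen vectors (most recent first). -/
noncomputable def gl (T : H →L[ℂ] H) (hdr : DenseRange (T : H → H))
    (hns : ¬ Function.Surjective (T : H → H)) : ℕ → List H
  | 0 => []
  | n + 1 => nextVec T hdr hns (gl T hdr hns n) :: gl T hdr hns n

/-- The orthonormal sequence. -/
noncomputable def gseq (T : H →L[ℂ] H) (hdr : DenseRange (T : H → H))
    (hns : ¬ Function.Surjective (T : H → H)) (n : ℕ) : H :=
  nextVec T hdr hns (gl T hdr hns n)

lemma gl_length (T : H →L[ℂ] H) (hdr : DenseRange (T : H → H))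
    (hns : ¬ Function.Surjective (T : H → H)) (n : ℕ) :
    (gl T hdr hns n).length = n := by
  induction n with
  | zero => rfl
  | succ n ih => simp [gl, ih]

lemma mem_gl (T : H →L[ℂ] H) (hdr : DenseRange (T : H → H))
    (hns : ¬ Function.Surjective (T : H → H)) {m n : ℕ} (h : m < n) :
    gseq T hdr hns m ∈ gl T hdr hns n := by
  induction n with
  | zero => omega
  | succ n ih =>
    rcases Nat.lt_succ_iff_lt_or_eq.1 h with h' | h'
    · exact List.mem_cons_of_mem _ (ih h')
    · subst h'
      exact List.mem_cons_self

lemma gseq_norm (T : H →L[ℂ] H) (hdr : DenseRange (T : H → H))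
    (hns : ¬ Function.Surjective (T : H → H)) (n : ℕ) :
    ‖gseq T hdr hns n‖ = 1 :=
  (nextVec_spec T hdr hns (gl T hdr hns n)).1

lemma gseq_T_norm (T : H →L[ℂ] H) (hdr : DenseRange (T : H → H))
    (hns : ¬ Function.Surjective (T : H → H)) (n : ℕ) :
    ‖T (gseq T hdr hns n)‖ < 1 / ((n : ℝ) + 1) := by
  have := (nextVec_spec T hdr hns (gl T hdr hns n)).2.1
  rwa [gl_length] at this

lemma gseq_orth (T : H →L[ℂ] H) (hdr : DenseRange (T : H → H))
    (hns : ¬ Function.Surjective (T : H → H)) {m n : ℕ} (h : m < n) :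
    (inner ℂ (gseq T hdr hns m) (gseq T hdr hns n) : ℂ) = 0 ∧
    (inner ℂ (gseq T hdr hns m) (T (gseq T hdr hns n)) : ℂ) = 0 ∧
    (inner ℂ (T (gseq T hdr hns m)) (gseq T hdr hns n) : ℂ) = 0 ∧
    (inner ℂ (T (gseq T hdr hns m)) (T (gseq T hdr hns n)) : ℂ) = 0 := by
  have hspec := nextVec_spec T hdr hns (gl T hdr hns n)
  have hg : gseq T hdr hns n ∈ (spanOf T (gl T hdr hns n))ᗮ := hspec.2.2.1
  have hTg : T (gseq T hdr hns n) ∈ (spanOf T (gl T hdr hns n))ᗮ := hspec.2.2.2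
  have hm : gseq T hdr hns m ∈ spanOf T (gl T hdr hns n) :=
    Submodule.subset_span (Or.inl (mem_gl T hdr hns h))
  have hTm : T (gseq T hdr hns m) ∈ spanOf T (gl T hdr hns n) :=
    Submodule.subset_span (Or.inr ⟨_, mem_gl T hdr hns h, rfl⟩)
  exact ⟨hg _ hm, hTg _ hm, hg _ hTm, hTg _ hTm⟩

end Rec

/-- Step 3 of the construction: an orthonormal sequence `(gₙ)` with `‖T gₙ‖ → 0` and
`span{g_j, T g_j} ⊥ span{g_k, T g_k}` for `j ≠ k`. -/
theorem stmt_7 {H : Type*} [NormedAddCommGroup H] [InnerProductSpace ℂ H] [CompleteSpace H]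
    (hinf : ¬ FiniteDimensional ℂ H)
    (T : H →L[ℂ] H) (hinj : Function.Injective T) (hdr : DenseRange (T : H → H))
    (hns : ¬ Function.Surjective (T : H → H)) :
    ∃ g : ℕ → H, Orthonormal ℂ g ∧
      Tendsto (fun n : ℕ => ‖T (g n)‖) atTop (𝓝 0) ∧
      (∀ j k : ℕ, j ≠ k →
        (inner ℂ (g j) (g k) : ℂ) = 0 ∧ (inner ℂ (g j) (T (g k)) : ℂ) = 0 ∧
        (inner ℂ (T (g j)) (g k) : ℂ) = 0 ∧ (inner ℂ (T (g j)) (T (g k)) : ℂ) = 0) := by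
  refine ⟨gseq T hdr hns, ?_, ?_, ?_⟩
  · refine ⟨gseq_norm T hdr hns, fun i j hij => ?_⟩
    rcases hij.lt_or_gt with h | h
    · exact (gseq_orth T hdr hns h).1
    · exact inner_eq_zero_symm.2 (gseq_orth T hdr hns h).1
  · refine squeeze_zero (fun n => norm_nonneg _) (fun n => (gseq_T_norm T hdr hns n).le) ?_
    exact tendsto_one_div_add_atTop_nhds_zero_nat
  · intro j k hjk
    rcases hjk.lt_or_gt with h | h
    · obtain ⟨h1, h2, h3, h4⟩ := gseq_orth T hdr hns h
      exact ⟨h1, h2, h3, h4⟩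
    · obtain ⟨h1, h2, h3, h4⟩ := gseq_orth T hdr hns h
      exact ⟨inner_eq_zero_symm.2 h1, inner_eq_zero_symm.2 h3,
        inner_eq_zero_symm.2 h2, inner_eq_zero_symm.2 h4⟩
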